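/- arXiv:1510.08207 — 3 statements merged into one kernel-verified Lean document; each statement's English description precedes it below -/
import Mathlib

section
/- Let p be a prime and let R be a (not necessarily unital) ring such that the additive quotient group R/Z(R) is isomorphic (as an additive group) to ℤ_p × ℤ_p. Then |Cent(R)| = p + 2. -/
/-!
For `r ∉ Z(R)` the centralizer `C(r)` is an additive subgroup with `Z(R) + ℤr ≤ C(r) < R`. Its image
in `R/Z(R) ≅ 𝔽_p²` is a proper subgroup, i.e. a proper `𝔽_p`-subspace, containing the nonzero vector
`r̄`, hence it is the line through `r̄`. So the centralizers are `R` itself and the preimages of the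
`p + 1` lines of `𝔽_p²`, and distinct lines have distinct preimages.
-/

/-- The centralizer of `r` in a (not necessarily unital) ring: `{s | r*s = s*r}`. -/
def rCentralizer {R : Type*} [NonUnitalRing R] (r : R) : Set R := {s | r * s = s * r}

/-- The set of all centralizers of elements of `R`. -/
def Cent (R : Type*) [NonUnitalRing R] : Set (Set R) :=
  Set.range (fun r : R => rCentralizer r)

/-- The center of a (not necessarily unital) ring, as a set. -/
def rCenter (R : Type*) [NonUnitalRing R] : Set R := {s | ∀ r : R, r * s = s * r}

/-- The center of a (not necessarily unital) ring, as an additive subgroup. -/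
def centerAddSubgroup (R : Type*) [NonUnitalRing R] : AddSubgroup R where
  carrier := {s | ∀ r : R, r * s = s * r}
  zero_mem' := by intro r; rw [mul_zero, zero_mul]
  add_mem' := by intro a b ha hb r; rw [mul_add, add_mul, ha r, hb r]
  neg_mem' := by intro a ha r; rw [mul_neg, neg_mul, ha r]

open Module Projectivization
open scoped LinearAlgebra.Projectivization

theorem Submodule.eq_span_singleton_of_ne_top {K V : Type*} [DivisionRing K] [AddCommGroup V]
    [Module K V] (hV : finrank K V = 2) {W : Submodule K V} (hW : W ≠ ⊤) {v : V} (hv : v ≠ 0)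
    (hvW : v ∈ W) : W = K ∙ v := by
  have : FiniteDimensional K V := Module.finite_of_finrank_eq_succ hV
  refine (Submodule.eq_of_le_of_finrank_le ((span_singleton_le_iff_mem v W).2 hvW) ?_).symm
  rw [finrank_span_singleton hv]
  have := Submodule.finrank_lt hW
  omega

section Centralizer

variable {R : Type*} [NonUnitalRing R]

theorem rCentralizer_eq_centralizer (r : R) : rCentralizer r = Set.centralizer {r} := by
  ext s
  simp [rCentralizer, Set.mem_centralizer_iff]

theorem centerAddSubgroup_le_centralizer (r : R) :
    centerAddSubgroup R ≤ (NonUnitalSubring.centralizer {r}).toAddSubgroup := by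
  intro s hs
  exact Set.mem_centralizer_iff.2 fun _ hm => (Set.mem_singleton_iff.1 hm) ▸ hs _

theorem rCentralizer_eq_univ_iff {r : R} : rCentralizer r = Set.univ ↔ r ∈ centerAddSubgroup R :=
  Set.eq_univ_iff_forall.trans <| forall_congr' fun _ => eq_comm

variable {p : ℕ} [Fact p.Prime] {V : Type*} [AddCommGroup V] [Module (ZMod p) V]

theorem rCentralizer_eq_preimage_span (hV : finrank (ZMod p) V = 2) {φ : R →+ V}
    (hker : φ.ker = centerAddSubgroup R) {r : R} (hr : r ∉ centerAddSubgroup R) :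
    rCentralizer r = φ ⁻¹' (ZMod p ∙ φ r) := by
  set C := (NonUnitalSubring.centralizer {r}).toAddSubgroup
  have hC : (C.map φ).comap φ = C :=
    AddSubgroup.comap_map_eq_self (hker ▸ centerAddSubgroup_le_centralizer r)
  have hline : AddSubgroup.toZModSubmodule p (C.map φ) = ZMod p ∙ φ r := by
    refine Submodule.eq_span_singleton_of_ne_top hV ?_ ?_ ⟨r, Set.mem_centralizer_iff.2 ?_, rfl⟩
    · intro htop
      apply hr
      intro s
      have hs : s ∈ (C.map φ).comap φ := by
        rw [AddSubgroup.mem_comap, ← AddSubgroup.mem_toZModSubmodule p, htop]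
        exact Submodule.mem_top
      rw [hC] at hs
      exact (Set.mem_centralizer_iff.1 hs r rfl).symm
    · exact fun h0 => hr (hker ▸ φ.mem_ker.2 h0)
    · simp
  rw [rCentralizer_eq_centralizer, ← hline]
  exact congrArg SetLike.coe hC.symm

theorem cent_eq_insert_univ_range (hV : finrank (ZMod p) V = 2) {φ : R →+ V}
    (hφ : Function.Surjective φ) (hker : φ.ker = centerAddSubgroup R) :
    Cent R = insert Set.univ (Set.range fun L : ℙ (ZMod p) V => φ ⁻¹' L.submodule) := by
  ext S
  constructor
  · rintro ⟨r, rfl⟩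
    by_cases hr : r ∈ centerAddSubgroup R
    · exact Or.inl (rCentralizer_eq_univ_iff.2 hr)
    · have hφr : φ r ≠ 0 := fun h0 => hr (hker ▸ φ.mem_ker.2 h0)
      refine Or.inr ⟨mk (ZMod p) (φ r) hφr, ?_⟩
      dsimp only
      rw [rCentralizer_eq_preimage_span hV hker hr, submodule_mk]
  · rintro (rfl | ⟨L, rfl⟩)
    · exact ⟨0, rCentralizer_eq_univ_iff.2 (centerAddSubgroup R).zero_mem⟩
    · obtain ⟨r, hr⟩ := hφ L.rep
      have hrZ : r ∉ centerAddSubgroup R := fun h => L.rep_nonzero (hr ▸ φ.mem_ker.1 (hker ▸ h))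
      exact ⟨r, by dsimp only; rw [rCentralizer_eq_preimage_span hV hker hrZ, hr, submodule_eq]⟩

theorem ncard_cent (hV : finrank (ZMod p) V = 2) {φ : R →+ V} (hφ : Function.Surjective φ)
    (hker : φ.ker = centerAddSubgroup R) : (Cent R).ncard = p + 2 := by
  have hinj : Function.Injective fun L : ℙ (ZMod p) V => φ ⁻¹' L.submodule :=
    (Set.preimage_injective.2 hφ).comp (SetLike.coe_injective.comp submodule_injective)
  have hcard : Nat.card (ℙ (ZMod p) V) = p + 1 := by
    rw [card_of_finrank_two _ _ hV, Nat.card_zmod]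
  have : Finite (ℙ (ZMod p) V) := Nat.finite_of_card_ne_zero (by omega)
  have hproper (L : ℙ (ZMod p) V) : φ ⁻¹' L.submodule ≠ Set.univ := by
    intro h
    have htop : L.submodule = ⊤ := by
      rw [eq_top_iff]
      intro v _
      obtain ⟨x, rfl⟩ := hφ v
      exact Set.preimage_eq_univ_iff.1 h ⟨x, rfl⟩
    have := L.finrank_submodule
    rw [htop, finrank_top] at this
    omega
  rw [cent_eq_insert_univ_range hV hφ hker, Set.ncard_insert_of_notMem,
    Set.ncard_range_of_injective hinj, hcard]
  exact fun ⟨L, hL⟩ => hproper L hL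

end Centralizer

/-- If `R/Z(R) ≅ ℤ_p × ℤ_p` (as additive groups), then `|Cent(R)| = p + 2`. -/
theorem cent_of_quotient_center (p : ℕ) (hp : p.Prime) (R : Type*) [NonUnitalRing R]
    (h : Nonempty ((R ⧸ centerAddSubgroup R) ≃+ (ZMod p × ZMod p))) :
    (Cent R).ncard = p + 2 := by
  have : Fact p.Prime := ⟨hp⟩
  obtain ⟨e⟩ := h
  let φ := e.toAddMonoidHom.comp (QuotientAddGroup.mk' (centerAddSubgroup R))
  have hker : φ.ker = centerAddSubgroup R := by
    rw [AddMonoidHom.ker_comp_of_injective _ _ e.injective, QuotientAddGroup.ker_mk']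
  refine ncard_cent ?_ (e.surjective.comp (QuotientAddGroup.mk'_surjective _)) hker
  simp [finrank_prod]
end

section
/- Let R be a noncommutative finite (not necessarily unital) ring. Then |Cent(R)| = 4 if and only if the additive quotient group R/Z(R) is isomorphic (as an additive group) to ℤ_2 × ℤ_2. -/
/-!
Centralizers depend only on the class modulo the center, so `|Cent R| ≤ |R/Z|`; and if `x, y`
do not commute then `R, C(x), C(y), C(x + y)` are four distinct centralizers, so `|R/Z| = 4`
forces `|Cent R| = 4`. Conversely, if these are all the centralizers, then every `s ∈ C(y)` is
congruent to `0` or `y` modulo the center: otherwise `s ∉ C(x)`, so `s + x` lies in none of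
`C(x), C(y)` and hence in `C(x + y)`, which puts `s - y = (s + x) - (x + y)` in
`C(y) ∩ C(x + y) ⊆ Z`. Applied to the pairs `(y, x)`, `(x, y)`, `(y, x + y)` this leaves
`R/Z = {0, x, y, x + y}`, and applied to `2 • y ∈ C(y)` it shows that `R/Z` has exponent `2`.
-/

section

variable {R : Type*} [NonUnitalRing R] {r s x y : R}

theorem mem_rCentralizer_comm : s ∈ rCentralizer r ↔ r ∈ rCentralizer s := eq_comm

theorem self_mem_rCentralizer (r : R) : r ∈ rCentralizer r := rfl

theorem rCentralizer_zero : rCentralizer (0 : R) = Set.univ := by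
  ext s
  simp [rCentralizer]

theorem mem_rCentralizer_of_mem_center (hs : s ∈ centerAddSubgroup R) (r : R) :
    s ∈ rCentralizer r :=
  hs r

def centralizerAddSubgroup (r : R) : AddSubgroup R where
  carrier := rCentralizer r
  zero_mem' := by simp [rCentralizer]
  add_mem' := by
    intro a b ha hb
    simp only [rCentralizer, Set.mem_ofPred_eq, mul_add, add_mul] at *
    rw [ha, hb]
  neg_mem' := by
    intro a ha
    simp only [rCentralizer, Set.mem_ofPred_eq, mul_neg, neg_mul] at *
    rw [ha]

theorem rCentralizer_eq_of_sub_mem_center (h : r - s ∈ centerAddSubgroup R) :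
    rCentralizer r = rCentralizer s := by
  ext t
  rw [mem_rCentralizer_comm, mem_rCentralizer_comm (s := t), ← sub_add_cancel r s]
  exact (centralizerAddSubgroup t).add_mem_cancel_left (mem_rCentralizer_of_mem_center h t)

theorem mem_rCentralizer_add_self_left : x ∈ rCentralizer (x + y) ↔ x ∈ rCentralizer y := by
  rw [mem_rCentralizer_comm, mem_rCentralizer_comm (r := y)]
  exact (centralizerAddSubgroup x).add_mem_cancel_left (self_mem_rCentralizer x)

theorem mem_rCentralizer_add_self_right : y ∈ rCentralizer (x + y) ↔ y ∈ rCentralizer x := by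
  rw [mem_rCentralizer_comm, mem_rCentralizer_comm (r := x)]
  exact (centralizerAddSubgroup y).add_mem_cancel_right (self_mem_rCentralizer y)

theorem ncard_cent_le_card_quotient [Finite (R ⧸ centerAddSubgroup R)] :
    (Cent R).ncard ≤ Nat.card (R ⧸ centerAddSubgroup R) := by
  have hCent : Cent R = Set.range fun q : R ⧸ centerAddSubgroup R => rCentralizer q.out := by
    refine Set.Subset.antisymm ?_ fun _ ⟨q, hq⟩ => ⟨q.out, hq⟩
    rintro _ ⟨r, rfl⟩
    exact ⟨r, rCentralizer_eq_of_sub_mem_center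
      (QuotientAddGroup.eq_iff_sub_mem.1 (QuotientAddGroup.out_eq' _))⟩
  rw [hCent, ← Nat.card_coe_set_eq]
  exact Finite.card_range_le _

theorem four_centralizers_subset_cent (x y : R) :
    {Set.univ, rCentralizer x, rCentralizer y, rCentralizer (x + y)} ⊆ Cent R := by
  simp only [Set.insert_subset_iff, Set.singleton_subset_iff]
  exact ⟨⟨0, rCentralizer_zero⟩, ⟨x, rfl⟩, ⟨y, rfl⟩, ⟨x + y, rfl⟩⟩

theorem ncard_four_centralizers (hxy : x ∉ rCentralizer y) :
    ({Set.univ, rCentralizer x, rCentralizer y, rCentralizer (x + y)} : Set (Set R)).ncard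
      = 4 := by
  have hyx : y ∉ rCentralizer x := mem_rCentralizer_comm.not.1 hxy
  have hx : x ∉ rCentralizer (x + y) := mem_rCentralizer_add_self_left.not.2 hxy
  have hy : y ∉ rCentralizer (x + y) := mem_rCentralizer_add_self_right.not.2 hyx
  rw [Set.ncard_insert_of_notMem, Set.ncard_insert_of_notMem, Set.ncard_pair
    (ne_of_mem_of_not_mem' (self_mem_rCentralizer y) hy)]
  · simp only [Set.mem_insert_iff, Set.mem_singleton_iff, not_or]
    exact ⟨ne_of_mem_of_not_mem' (self_mem_rCentralizer x) hxy,
      ne_of_mem_of_not_mem' (self_mem_rCentralizer x) hx⟩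
  · simp only [Set.mem_insert_iff, Set.mem_singleton_iff, not_or]
    exact ⟨ne_of_mem_of_not_mem' (Set.mem_univ y) hyx, ne_of_mem_of_not_mem' (Set.mem_univ x) hxy,
      ne_of_mem_of_not_mem' (Set.mem_univ x) hx⟩

theorem four_le_ncard_cent [Finite R] (hxy : x ∉ rCentralizer y) : 4 ≤ (Cent R).ncard :=
  ncard_four_centralizers hxy ▸ Set.ncard_le_ncard (four_centralizers_subset_cent x y)

theorem cent_eq_of_ncard_eq_four (h4 : (Cent R).ncard = 4) (hxy : x ∉ rCentralizer y) :
    Cent R = {Set.univ, rCentralizer x, rCentralizer y, rCentralizer (x + y)} :=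
  (Set.eq_of_subset_of_ncard_le (four_centralizers_subset_cent x y)
    (by rw [h4, ncard_four_centralizers hxy]) (Set.finite_of_ncard_ne_zero (by omega))).symm

section CentEq

variable (hCent : Cent R = {Set.univ, rCentralizer x, rCentralizer y, rCentralizer (x + y)})
include hCent

theorem rCentralizer_inter_subset_center_of_cent_eq :
    rCentralizer x ∩ rCentralizer y ⊆ centerAddSubgroup R := by
  rintro s ⟨hx, hy⟩ r
  change s ∈ rCentralizer r
  have hr : rCentralizer r ∈ Cent R := ⟨r, rfl⟩
  simp only [hCent, Set.mem_insert_iff, Set.mem_singleton_iff] at hr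
  rcases hr with hr | hr | hr | hr <;> rw [hr]
  · trivial
  · exact hx
  · exact hy
  · exact mem_rCentralizer_comm.2 <| (centralizerAddSubgroup s).add_mem
      (mem_rCentralizer_comm.1 hx) (mem_rCentralizer_comm.1 hy)

theorem mem_rCentralizer_cover_of_cent_eq (r : R) :
    r ∈ rCentralizer x ∨ r ∈ rCentralizer y ∨ r ∈ rCentralizer (x + y) := by
  have hr : rCentralizer r ∈ Cent R := ⟨r, rfl⟩
  simp only [hCent, Set.mem_insert_iff, Set.mem_singleton_iff] at hr
  rcases hr with hr | hr | hr | hr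
  · refine Or.inl (mem_rCentralizer_of_mem_center (fun t => ?_) x)
    exact (show t ∈ rCentralizer r from hr ▸ Set.mem_univ t).symm
  all_goals rw [← hr]; simp [self_mem_rCentralizer]

end CentEq

theorem mem_center_or_sub_mem_center (h4 : (Cent R).ncard = 4) (hxy : x ∉ rCentralizer y)
    (hs : s ∈ rCentralizer y) : s ∈ centerAddSubgroup R ∨ s - y ∈ centerAddSubgroup R := by
  have hCent := cent_eq_of_ncard_eq_four h4 hxy
  have hZ := rCentralizer_inter_subset_center_of_cent_eq hCent
  by_cases hsx : s ∈ rCentralizer x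
  · exact Or.inl (hZ ⟨hsx, hs⟩)
  have hsxy : s + x ∈ rCentralizer (x + y) := by
    rcases mem_rCentralizer_cover_of_cent_eq hCent (s + x) with h | h | h
    · exact absurd
        (((centralizerAddSubgroup x).add_mem_cancel_right (self_mem_rCentralizer x)).1 h) hsx
    · exact absurd (((centralizerAddSubgroup y).add_mem_cancel_left hs).1 h) hxy
    · exact h
  have hsy_xy : s - y ∈ rCentralizer (x + y) := by
    have h := (centralizerAddSubgroup (x + y)).sub_mem hsxy (self_mem_rCentralizer (x + y))
    rwa [show s + x - (x + y) = s - y by abel] at h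
  have hsy_y : s - y ∈ rCentralizer y := (centralizerAddSubgroup y).sub_mem hs rfl
  have hsy_x : s - y ∈ rCentralizer x := by
    rw [mem_rCentralizer_comm] at hsy_xy hsy_y ⊢
    have h := (centralizerAddSubgroup (s - y)).sub_mem hsy_xy hsy_y
    rwa [add_sub_cancel_right] at h
  exact Or.inr (hZ ⟨hsy_x, hsy_y⟩)

theorem two_nsmul_mem_center (h4 : (Cent R).ncard = 4) (r : R) :
    2 • r ∈ centerAddSubgroup R := by
  by_cases hr : r ∈ centerAddSubgroup R
  · exact (centerAddSubgroup R).nsmul_mem hr 2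
  obtain ⟨t, ht⟩ : ∃ t : R, t ∉ rCentralizer r := by
    simpa [centerAddSubgroup, rCentralizer, eq_comm] using hr
  refine (mem_center_or_sub_mem_center h4 ht
    ((centralizerAddSubgroup r).nsmul_mem (self_mem_rCentralizer r) 2)).resolve_right ?_
  rwa [two_nsmul, add_sub_cancel_right]

theorem card_quotient_le_four (h4 : (Cent R).ncard = 4) (hxy : x ∉ rCentralizer y) :
    Nat.card (R ⧸ centerAddSubgroup R) ≤ 4 := by
  have hyx : y ∉ rCentralizer x := mem_rCentralizer_comm.not.1 hxy
  have hy : y ∉ rCentralizer (x + y) := mem_rCentralizer_add_self_right.not.2 hyx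
  let f : Fin 4 → R ⧸ centerAddSubgroup R := fun i => ((![0, x, y, x + y] i : R) :)
  have hf : Function.Surjective f := by
    intro q
    induction q using QuotientAddGroup.induction_on with | H r => ?_
    rcases mem_rCentralizer_cover_of_cent_eq (cent_eq_of_ncard_eq_four h4 hxy) r with h | h | h
    · rcases mem_center_or_sub_mem_center h4 hyx h with h | h
      · exact ⟨0, (QuotientAddGroup.eq_zero_iff r).2 h |>.symm⟩
      · exact ⟨1, (QuotientAddGroup.eq_iff_sub_mem.2 h).symm⟩
    · rcases mem_center_or_sub_mem_center h4 hxy h with h | h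
      · exact ⟨0, (QuotientAddGroup.eq_zero_iff r).2 h |>.symm⟩
      · exact ⟨2, (QuotientAddGroup.eq_iff_sub_mem.2 h).symm⟩
    · rcases mem_center_or_sub_mem_center h4 hy h with h | h
      · exact ⟨0, (QuotientAddGroup.eq_zero_iff r).2 h |>.symm⟩
      · exact ⟨3, (QuotientAddGroup.eq_iff_sub_mem.2 h).symm⟩
  simpa using Nat.card_le_card_of_surjective f hf

theorem exists_notMem_rCentralizer_of_nontrivial [Nontrivial (R ⧸ centerAddSubgroup R)] :
    ∃ x y : R, x ∉ rCentralizer y := by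
  obtain ⟨q, hq⟩ := exists_ne (0 : R ⧸ centerAddSubgroup R)
  obtain ⟨x, rfl⟩ := QuotientAddGroup.mk_surjective q
  obtain ⟨y, hy⟩ : ∃ y : R, x ∉ rCentralizer y := by
    simpa [centerAddSubgroup, rCentralizer] using (QuotientAddGroup.eq_zero_iff x).not.1 hq
  exact ⟨x, y, hy⟩

theorem isAddKleinFour_quotient_center [Finite R] (h4 : (Cent R).ncard = 4) :
    IsAddKleinFour (R ⧸ centerAddSubgroup R) := by
  have hge : 4 ≤ Nat.card (R ⧸ centerAddSubgroup R) := h4 ▸ ncard_cent_le_card_quotient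
  have : Nontrivial (R ⧸ centerAddSubgroup R) := Finite.one_lt_card_iff_nontrivial.1 (by omega)
  obtain ⟨x, y, hxy⟩ := exists_notMem_rCentralizer_of_nontrivial (R := R)
  refine ⟨le_antisymm (card_quotient_le_four h4 hxy) hge,
    (AddMonoid.exponent_eq_prime_iff Nat.prime_two).2 fun q hq => ?_⟩
  induction q using QuotientAddGroup.induction_on with | H r => ?_
  refine addOrderOf_eq_prime ?_ hq
  rw [← QuotientAddGroup.mk_nsmul, QuotientAddGroup.eq_zero_iff]
  exact two_nsmul_mem_center h4 r

end

theorem four_centralizer_iff_general (R : Type*) [NonUnitalRing R] [Finite R] :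
    (Cent R).ncard = 4 ↔
      Nonempty ((R ⧸ centerAddSubgroup R) ≃+ (ZMod 2 × ZMod 2)) := by
  refine ⟨fun h4 => ?_, fun ⟨e⟩ => ?_⟩
  · have := isAddKleinFour_quotient_center h4
    exact IsAddKleinFour.nonempty_addEquiv
  · have hQ : Nat.card (R ⧸ centerAddSubgroup R) = 4 :=
      (Nat.card_congr e.toEquiv).trans (by simp)
    have := e.toEquiv.nontrivial
    obtain ⟨x, y, hxy⟩ := exists_notMem_rCentralizer_of_nontrivial (R := R)
    exact le_antisymm (hQ ▸ ncard_cent_le_card_quotient) (four_le_ncard_cent hxy)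

/-- A noncommutative finite ring has exactly `4` centralizers iff
`R/Z(R) ≅ ℤ_2 × ℤ_2` as additive groups. -/
theorem four_centralizer_iff (R : Type*) [NonUnitalRing R] [Finite R]
    (h : ∃ x y : R, x * y ≠ y * x) :
    (Cent R).ncard = 4 ↔
      Nonempty ((R ⧸ centerAddSubgroup R) ≃+ (ZMod 2 × ZMod 2)) :=
  four_centralizer_iff_general R
end

section
/- Let R be a (not necessarily unital) ring which is the union R = A ∪ B ∪ C of three proper, pairwise distinct subrings A, B, C, and let K = A ∩ B ∩ C. Then each pairwise intersection equals the triple intersection, i.e., A ∩ B = A ∩ C = B ∩ C = K, and K has additive index 4 in R, i.e., |R : K| = 4. -/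
/-!
Only the additive structure matters: this is Scorza's theorem for a group covered by three proper
subgroups. Since no group is the union of two proper subgroups, each of `A`, `B`, `C` contains an
element lying in neither of the other two. Translating by such an element `c ∈ C` shows
`A ∩ B ⊆ C`, and symmetrically for the other pairs. Then a sum of an element of `B \ A` and one of
`C \ A` lies in `A`, so the complement of `A` is the single coset `b + A`: `A` has index `2`, and
likewise `B`. Finally `A ∩ B = K` has index `2` in `B`, hence index `4` in the whole group.
-/

namespace AddSubgroup

variable {G : Type*} [AddGroup G] {A B C : AddSubgroup G}

theorem exists_notMem_notMem_of_ne_top (hA : A ≠ ⊤) (hB : B ≠ ⊤) : ∃ x, x ∉ A ∧ x ∉ B := by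
  obtain ⟨y, hyA⟩ := not_forall.1 (mt (eq_top_iff' A).2 hA)
  obtain ⟨z, hzB⟩ := not_forall.1 (mt (eq_top_iff' B).2 hB)
  by_cases hyB : y ∈ B
  · by_cases hzA : z ∈ A
    · exact ⟨y + z, fun h => hyA ((add_mem_cancel_right hzA).1 h),
        fun h => hzB ((add_mem_cancel_left hyB).1 h)⟩
    · exact ⟨z, hzA, hzB⟩
  · exact ⟨y, hyA, hyB⟩

theorem exists_mem_notMem_notMem (hcov : ∀ x, x ∈ A ∨ x ∈ B ∨ x ∈ C) (hB : B ≠ ⊤) (hC : C ≠ ⊤) :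
    ∃ a ∈ A, a ∉ B ∧ a ∉ C := by
  obtain ⟨a, haB, haC⟩ := exists_notMem_notMem_of_ne_top hB hC
  exact ⟨a, (hcov a).resolve_right (not_or.2 ⟨haB, haC⟩), haB, haC⟩

theorem inf_le_of_mem_notMem_notMem (hcov : ∀ x, x ∈ A ∨ x ∈ B ∨ x ∈ C) {c : G} (hcC : c ∈ C)
    (hcA : c ∉ A) (hcB : c ∉ B) : A ⊓ B ≤ C := by
  intro x hx
  obtain ⟨hxA, hxB⟩ := mem_inf.1 hx
  rcases hcov (x + c) with h | h | h
  · exact absurd ((add_mem_cancel_left hxA).1 h) hcA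
  · exact absurd ((add_mem_cancel_left hxB).1 h) hcB
  · exact (add_mem_cancel_right hcC).1 h

theorem add_mem_of_mem_diff_of_mem_diff (hcov : ∀ x, x ∈ A ∨ x ∈ B ∨ x ∈ C) (hBC : B ⊓ C ≤ A)
    {u v : G} (hu : u ∈ (B : Set G) \ A) (hv : v ∈ (C : Set G) \ A) : u + v ∈ A := by
  rcases hcov (u + v) with h | h | h
  · exact h
  · exact absurd (hBC ⟨(add_mem_cancel_left hu.1).1 h, hv.1⟩) hv.2
  · exact absurd (hBC ⟨hu.1, (add_mem_cancel_right hv.1).1 h⟩) hu.2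

theorem index_eq_two_of_forall_mem_or (hcov : ∀ x, x ∈ A ∨ x ∈ B ∨ x ∈ C) (hBC : B ⊓ C ≤ A)
    {b c : G} (hbB : b ∈ B) (hbA : b ∉ A) (hcC : c ∈ C) (hcA : c ∉ A) : A.index = 2 := by
  have hb' : -b ∈ (B : Set G) \ A := ⟨B.neg_mem hbB, mt A.neg_mem_iff.1 hbA⟩
  refine index_eq_two_iff_exists_notMem_and'.2 ⟨-b, hb'.2, fun x => or_iff_not_imp_right.2 ?_⟩
  intro hxA
  rcases (hcov x).resolve_left hxA with hxB | hxC
  · have hbc : -b + c ∈ A := add_mem_of_mem_diff_of_mem_diff hcov hBC hb' ⟨hcC, hcA⟩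
    have hcx : -c + x ∈ A :=
      add_mem_of_mem_diff_of_mem_diff (fun y => (hcov y).imp_right Or.symm) (inf_comm B C ▸ hBC)
        ⟨C.neg_mem hcC, mt A.neg_mem_iff.1 hcA⟩ ⟨hxB, hxA⟩
    simpa [add_assoc] using A.add_mem hbc hcx
  · exact add_mem_of_mem_diff_of_mem_diff hcov hBC hb' ⟨hxC, hxA⟩

theorem index_inf_eq_four_of_index_eq_two (hA : A.index = 2) (hB : B.index = 2)
    (hBA : ¬B ≤ A) : (A ⊓ B).index = 4 := by
  obtain ⟨b, hbB, hbA⟩ := SetLike.not_le_iff_exists.1 hBA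
  have hrel : A.relIndex B = 2 := by
    refine relIndex_eq_two_iff_exists_notMem_and'.2 ⟨b, hbB, hbA, fun x _ => ?_⟩
    by_cases hxA : x ∈ A <;> simp [add_mem_iff_of_index_two hA, hbA, hxA]
  rw [← relIndex_mul_index inf_le_right, inf_relIndex_right, hrel, hB]

theorem inf_eq_inf_inf_and_index_eq_four_of_union_eq_univ (hA : A ≠ ⊤) (hB : B ≠ ⊤)
    (hC : C ≠ ⊤) (hcover : (A : Set G) ∪ B ∪ C = Set.univ) :
    A ⊓ B = A ⊓ B ⊓ C ∧ A ⊓ C = A ⊓ B ⊓ C ∧ B ⊓ C = A ⊓ B ⊓ C ∧ (A ⊓ B ⊓ C).index = 4 := by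
  have hcov (x : G) : x ∈ A ∨ x ∈ B ∨ x ∈ C := by
    simpa [or_assoc] using Set.eq_univ_iff_forall.1 hcover x
  obtain ⟨a, haA, haB, haC⟩ := exists_mem_notMem_notMem hcov hB hC
  obtain ⟨b, hbB, hbC, hbA⟩ := exists_mem_notMem_notMem (fun x => (hcov x).rotate) hC hA
  obtain ⟨c, hcC, hcA, hcB⟩ := exists_mem_notMem_notMem (fun x => (hcov x).rotate.rotate) hA hB
  have hAB : A ⊓ B ≤ C := inf_le_of_mem_notMem_notMem hcov hcC hcA hcB
  have hBC : B ⊓ C ≤ A := inf_le_of_mem_notMem_notMem (fun x => (hcov x).rotate) haA haB haC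
  have hAC : A ⊓ C ≤ B :=
    inf_le_of_mem_notMem_notMem (fun x => (hcov x).imp_right Or.symm) hbB hbA hbC
  have hiA : A.index = 2 := index_eq_two_of_forall_mem_or hcov hBC hbB hbA hcC hcA
  have hiB : B.index = 2 :=
    index_eq_two_of_forall_mem_or (fun x => or_left_comm.1 (hcov x)) hAC haA haB hcC hcB
  refine ⟨(inf_of_le_left hAB).symm, ?_, ?_, ?_⟩
  · rw [inf_right_comm, inf_of_le_left hAC]
  · rw [inf_assoc, inf_of_le_right hBC]
  · rw [inf_of_le_left hAB]
    exact index_inf_eq_four_of_index_eq_two hiA hiB fun h => hbA (h hbB)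

end AddSubgroup

theorem union_three_subrings_index_four_general (R : Type*) [NonUnitalRing R]
    (A B C : NonUnitalSubring R) (hA : A ≠ ⊤) (hB : B ≠ ⊤) (hC : C ≠ ⊤)
    (hcover : (A : Set R) ∪ (B : Set R) ∪ (C : Set R) = Set.univ) :
    A ⊓ B = A ⊓ B ⊓ C ∧ A ⊓ C = A ⊓ B ⊓ C ∧ B ⊓ C = A ⊓ B ⊓ C ∧
      (A ⊓ B ⊓ C).toAddSubgroup.index = 4 := by
  have inj := NonUnitalSubring.toAddSubgroup_injective (R := R)
  have htop {S : NonUnitalSubring R} (hS : S ≠ ⊤) : S.toAddSubgroup ≠ ⊤ := fun h => hS (inj h)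
  obtain ⟨hAB, hAC, hBC, hindex⟩ :=
    AddSubgroup.inf_eq_inf_inf_and_index_eq_four_of_union_eq_univ (htop hA) (htop hB) (htop hC)
      hcover
  exact ⟨inj hAB, inj hAC, inj hBC, hindex⟩

/-- If a ring is the union of three proper, pairwise distinct subrings `A`, `B`, `C`,
then all pairwise intersections equal `K = A ∩ B ∩ C`, and `K` has additive index `4`. -/
theorem union_three_subrings_index_four (R : Type*) [NonUnitalRing R]
    (A B C : NonUnitalSubring R) (hA : A ≠ ⊤) (hB : B ≠ ⊤) (hC : C ≠ ⊤)
    (hAB : A ≠ B) (hAC : A ≠ C) (hBC : B ≠ C)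
    (hcover : (A : Set R) ∪ (B : Set R) ∪ (C : Set R) = Set.univ) :
    A ⊓ B = A ⊓ B ⊓ C ∧ A ⊓ C = A ⊓ B ⊓ C ∧ B ⊓ C = A ⊓ B ⊓ C ∧
      (A ⊓ B ⊓ C).toAddSubgroup.index = 4 :=
  union_three_subrings_index_four_general R A B C hA hB hC hcover
end
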